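/- Let R be a commutative ring and let a,b,c,d ∈ R, giving the integer-matrix binary cubic form f(x,y) = a·x³ + 3b·x²y + 3c·xy² + d·y³ with reduced discriminant disc(f) = a²d² − 3b²c² − 6abcd + 4ac³ + 4b³d. Define the scaled Hessian h(x,y) = (ac−b²)·x² + (ad−bc)·xy + (bd−c²)·y² and the Jacobian covariant g(x,y) = f_x·h_y − f_y·h_x (where f_x, f_y, h_x, h_y are the formal partial derivatives). Then the syzygy g² + 36·h³ = 9·disc(f)·f² holds identically as an equality of polynomials in R[x,y] (equivalently, (g/3)² − disc(f)·f² + 4h³ = 0 when 3 is invertible). -/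
import Mathlib


/-!
STATEMENT 1: the syzygy g² + 36·h³ = 9·disc(f)·f² for an integer-matrix binary cubic
form f = a·x³ + 3b·x²y + 3c·xy² + d·y³ over a commutative ring R, where
disc(f) = a²d² − 3b²c² − 6abcd + 4ac³ + 4b³d,
h = (ac−b²)x² + (ad−bc)xy + (bd−c²)y² is the scaled Hessian, and
g = f_x·h_y − f_y·h_x is the Jacobian covariant.
-/

open MvPolynomial

noncomputable section

/-- The integer-matrix binary cubic form `a·x³ + 3b·x²y + 3c·xy² + d·y³`
as a polynomial in `R[x,y]`. -/
def cubicForm {R : Type*} [CommRing R] (a b c d : R) : MvPolynomial (Fin 2) R :=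
  C a * X 0 ^ 3 + C (3 * b) * X 0 ^ 2 * X 1 + C (3 * c) * X 0 * X 1 ^ 2 + C d * X 1 ^ 3

/-- The scaled Hessian `h = (1/36)(f_xx·f_yy − f_xy²) = (ac−b²)x² + (ad−bc)xy + (bd−c²)y²`. -/
def cubicHessian {R : Type*} [CommRing R] (a b c d : R) : MvPolynomial (Fin 2) R :=
  C (a * c - b ^ 2) * X 0 ^ 2 + C (a * d - b * c) * X 0 * X 1 + C (b * d - c ^ 2) * X 1 ^ 2

/-- The Jacobian covariant `g = f_x·h_y − f_y·h_x`. -/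
def cubicG {R : Type*} [CommRing R] (a b c d : R) : MvPolynomial (Fin 2) R :=
  pderiv 0 (cubicForm a b c d) * pderiv 1 (cubicHessian a b c d)
    - pderiv 1 (cubicForm a b c d) * pderiv 0 (cubicHessian a b c d)

/-- The reduced discriminant `disc(f) = a²d² − 3b²c² − 6abcd + 4ac³ + 4b³d`. -/
def cubicDisc {R : Type*} [CommRing R] (a b c d : R) : R :=
  a ^ 2 * d ^ 2 - 3 * b ^ 2 * c ^ 2 - 6 * a * b * c * d + 4 * a * c ^ 3 + 4 * b ^ 3 * d

lemma pd0f {R : Type*} [CommRing R] (a b c d : R) :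
    pderiv 0 (cubicForm a b c d) =
      C (3*a) * X 0 ^ 2 + C (6*b) * X 0 * X 1 + C (3*c) * X 1 ^ 2 := by
  simp only [cubicForm, map_add, pderiv_mul, pderiv_C, pderiv_X_self, pderiv_X,
    Pi.single_eq_same, Pi.single_eq_of_ne (by decide : (1:Fin 2) ≠ 0),
    Derivation.leibniz_pow, smul_eq_mul]
  simp only [map_mul, map_sub, map_pow, map_ofNat]
  ring

lemma pd1f {R : Type*} [CommRing R] (a b c d : R) :
    pderiv 1 (cubicForm a b c d) =
      C (3*b) * X 0 ^ 2 + C (6*c) * X 0 * X 1 + C (3*d) * X 1 ^ 2 := by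
  simp only [cubicForm, map_add, pderiv_mul, pderiv_C, pderiv_X_self, pderiv_X,
    Pi.single_eq_same, Pi.single_eq_of_ne (by decide : (0:Fin 2) ≠ 1),
    Derivation.leibniz_pow, smul_eq_mul]
  simp only [map_mul, map_sub, map_pow, map_ofNat]
  ring

lemma pd0h {R : Type*} [CommRing R] (a b c d : R) :
    pderiv 0 (cubicHessian a b c d) =
      C (2*(a*c-b^2)) * X 0 + C (a*d-b*c) * X 1 := by
  simp only [cubicHessian, map_add, pderiv_mul, pderiv_C, pderiv_X_self, pderiv_X,
    Pi.single_eq_same, Pi.single_eq_of_ne (by decide : (1:Fin 2) ≠ 0),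
    Derivation.leibniz_pow, smul_eq_mul]
  simp only [map_mul, map_sub, map_pow, map_ofNat]
  ring

lemma pd1h {R : Type*} [CommRing R] (a b c d : R) :
    pderiv 1 (cubicHessian a b c d) =
      C (a*d-b*c) * X 0 + C (2*(b*d-c^2)) * X 1 := by
  simp only [cubicHessian, map_add, pderiv_mul, pderiv_C, pderiv_X_self, pderiv_X,
    Pi.single_eq_same, Pi.single_eq_of_ne (by decide : (0:Fin 2) ≠ 1),
    Derivation.leibniz_pow, smul_eq_mul]
  simp only [map_mul, map_sub, map_pow, map_ofNat]
  ring

set_option maxHeartbeats 4000000 in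
/-- The syzygy `g² + 36·h³ = 9·disc(f)·f²`, as an identity of polynomials in `R[x,y]`. -/
theorem cubic_syzygy {R : Type*} [CommRing R] (a b c d : R) :
    cubicG a b c d ^ 2 + 36 * cubicHessian a b c d ^ 3
      = C (9 * cubicDisc a b c d) * cubicForm a b c d ^ 2 := by
  rw [cubicG, pd0f, pd1f, pd0h, pd1h, cubicForm, cubicHessian, cubicDisc]
  simp only [map_mul, map_add, map_sub, map_pow, map_ofNat]
  ring

end
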